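/- Let A B : Fin m → Fin n → ℝ, let y : Fin n → ℝ be a solution (i.e. (A⊗y) i = (B⊗y) i for all i), and let x : Fin n → ℝ satisfy y ≤ x pointwise. Then y ≤ φ₀^[r](x) pointwise for every r ∈ ℕ; in particular y is below every vector produced by the alternating method started at x. -/

import Mathlib

/-!
A solution `y` is a lower bound that `φ₀` preserves: if `y ≤ z`, then for every `i` and `j`,
`max (A i j) (B i j) + y j ≤ (A⊗y) i = (B⊗y) i ≤ min ((A⊗z) i) ((B⊗z) i)` by monotonicity of `⊗`,
which is `y j ≤ φ₀(z) j`. Induction on `r` finishes the proof.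
-/

open Finset

/-- Max-plus product of a real matrix with a real vector:
`(mpMul M x) i = max_k (M i k + x k)`. -/
noncomputable def mpMul {p n : ℕ} [NeZero p] [NeZero n]
    (M : Fin p → Fin n → ℝ) (x : Fin n → ℝ) : Fin p → ℝ :=
  fun i => univ.sup' univ_nonempty fun k => M i k + x k

/-- One step of the alternating method for the system `A ⊗ x = B ⊗ x`:
`φ₀(x) j = min_i ( -max(A i j, B i j) + min((A⊗x) i, (B⊗x) i) )`. -/
noncomputable def phi0 {m n : ℕ} [NeZero m] [NeZero n]
    (A B : Fin m → Fin n → ℝ) (x : Fin n → ℝ) : Fin n → ℝ :=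
  fun j => univ.inf' univ_nonempty fun i =>
    (-(max (A i j) (B i j))) + min (mpMul A x i) (mpMul B x i)

section MaxPlus

variable {p n : ℕ} [NeZero p] [NeZero n]

lemma add_le_mpMul (M : Fin p → Fin n → ℝ) (x : Fin n → ℝ) (i : Fin p) (k : Fin n) :
    M i k + x k ≤ mpMul M x i :=
  le_sup' (fun k => M i k + x k) (mem_univ k)

lemma mpMul_mono (M : Fin p → Fin n → ℝ) : Monotone (mpMul M) := fun _ v huv i =>
  sup'_le _ _ fun k _ => (add_le_add_right (huv k) _).trans (add_le_mpMul M v i k)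

lemma le_phi0_of_le {A B : Fin p → Fin n → ℝ} {y z : Fin n → ℝ}
    (hy : mpMul A y = mpMul B y) (hyz : y ≤ z) : y ≤ phi0 A B z := fun j =>
  le_inf' _ _ fun i _ => by
    have hmax : max (A i j) (B i j) + y j ≤ mpMul A y i := by
      rw [← max_add_add_right]
      exact max_le (add_le_mpMul A y i j) ((add_le_mpMul B y i j).trans (congrFun hy i).ge)
    have hmin : mpMul A y i ≤ min (mpMul A z i) (mpMul B z i) :=
      le_min (mpMul_mono A hyz i) (hy ▸ mpMul_mono B hyz i)
    linarith

end MaxPlus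

theorem stmt11 {m n : ℕ} [NeZero m] [NeZero n]
    (A B : Fin m → Fin n → ℝ) (y x : Fin n → ℝ)
    (hy : ∀ i, mpMul A y i = mpMul B y i)
    (hle : ∀ j, y j ≤ x j) :
    ∀ r : ℕ, ∀ j, y j ≤ (phi0 A B)^[r] x j := by
  intro r
  induction r with
  | zero => exact hle
  | succ r ih =>
    rw [Function.iterate_succ_apply']
    exact le_phi0_of_le (funext hy) ih
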